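/- arXiv:math/0610477 — 2 statements merged into one kernel-verified Lean document; each statement's English description precedes it below -/
import Mathlib

section
/- Let w be a composition of n ≥ 3k+1 with at least k entries equal to 1. Then w has exactly k entries equal to 1 if and only if w has a k-deletion containing no entry equal to 1. -/
/-- A composition: a word of positive integers. -/
def IsComposition (w : List ℕ) : Prop := ∀ x ∈ w, 1 ≤ x

/-- Containment order on compositions: `u` embeds entrywise into a subword of `w`. -/
def CompLE (u w : List ℕ) : Prop :=
  ∃ v : List ℕ, v.Sublist w ∧ List.Forall₂ (· ≤ ·) u v

/-- The set of `k`-deletions of `w`: compositions `u ≤ w` with `‖u‖ = ‖w‖ - k`. -/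
def kDel (k : ℕ) (w : List ℕ) : Set (List ℕ) :=
  {u | IsComposition u ∧ CompLE u w ∧ u.sum + k = w.sum}

lemma forall₂_sum_le {u v : List ℕ} (h : List.Forall₂ (· ≤ ·) u v) : u.sum ≤ v.sum := by
  induction h with
  | nil => simp
  | cons h _ ih => simpa using Nat.add_le_add h ih

lemma forall₂_mem_two {u v : List ℕ} (h : List.Forall₂ (· ≤ ·) u v)
    (hu : ∀ x ∈ u, 2 ≤ x) : ∀ y ∈ v, 2 ≤ y := by
  induction h with
  | nil => simp
  | cons hab _ ih =>
    intro y hy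
    rcases List.mem_cons.mp hy with rfl | hy
    · exact le_trans (hu _ (by simp)) hab
    · exact ih (fun x hx => hu x (by simp [hx])) y hy

lemma filter_ne_one_sum (w : List ℕ) : (w.filter (fun x => x ≠ 1)).sum + w.count 1 = w.sum := by
  induction w with
  | nil => simp
  | cons a l ih =>
    by_cases ha : a = 1 <;>
      simp [List.count_cons, ha, List.filter_cons] at ih ⊢ <;> omega

lemma key {v w : List ℕ} (h : v.Sublist w) (hv : ∀ x ∈ v, 2 ≤ x) :
    w.count 1 + v.sum ≤ w.sum := by
  induction h with
  | slnil => simp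
  | cons a hs ih =>
    have := ih hv
    by_cases ha : a = 1 <;> simp [List.count_cons, ha] <;> omega
  | cons_cons a hs ih =>
    have h2 : 2 ≤ a := hv a (by simp)
    have := ih (fun x hx => hv x (by simp [hx]))
    have ha : a ≠ 1 := by omega
    simp [List.count_cons, ha]
    omega

theorem determine_exactly_k_ones (k n : ℕ) (w : List ℕ) (hw : IsComposition w)
    (hn : w.sum = n) (h : 3 * k + 1 ≤ n) (h1 : k ≤ w.count 1) :
    w.count 1 = k ↔ ∃ u ∈ kDel k w, (1 : ℕ) ∉ u := by
  constructor
  · intro hk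
    refine ⟨w.filter (fun x => x ≠ 1),
      ⟨?_, ⟨_, List.filter_sublist (l := w), List.forall₂_same.mpr fun x _ => le_rfl⟩, ?_⟩, ?_⟩
    · intro x hx
      exact hw x (List.mem_of_mem_filter hx)
    · rw [← hk]; exact filter_ne_one_sum w
    · simp
  · rintro ⟨u, ⟨hu, ⟨v, hvw, hf⟩, hsum⟩, h1u⟩
    have hu2 : ∀ x ∈ u, 2 ≤ x := by
      intro x hx
      have := hu x hx
      have : x ≠ 1 := fun he => h1u (he ▸ hx)
      omega
    have hkey := key hvw (forall₂_mem_two hf hu2)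
    have hle := forall₂_sum_le hf
    omega
end

section
/- Let w be a composition of n with more than k entries equal to 1, and let m = |w|. For 1 ≤ i ≤ m, let a_i = 1^{i−1} 2 1^{m−i} (length m, a single 2 in position i). Then a_i is contained in some k-deletion of w if and only if w(i) ≥ 2, provided m + 1 ≤ n − k. -/
lemma forall2_sum_le : ∀ {u v : List ℕ}, List.Forall₂ (· ≤ ·) u v → u.sum ≤ v.sum := by
  intro u v h
  induction h with
  | nil => simp
  | cons h _ ih => simp only [List.sum_cons]; omega

lemma exists_between_lists : ∀ (b : List ℕ), ∀ (w : List ℕ) (k : ℕ),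
    List.Forall₂ (· ≤ ·) b w → b.sum + k ≤ w.sum →
    ∃ u, List.Forall₂ (· ≤ ·) b u ∧ List.Forall₂ (· ≤ ·) u w ∧ u.sum + k = w.sum := by
  intro b
  induction b with
  | nil =>
    intro w k h hk
    cases h
    exact ⟨[], List.Forall₂.nil, List.Forall₂.nil, by simp at hk ⊢; omega⟩
  | cons b bs ih =>
    intro w k h hk
    cases h with
    | cons hb hbs =>
      rename_i x xs
      set t := min k (x - b) with ht
      obtain ⟨u, h1, h2, h3⟩ := ih xs (k - t) hbs (by
        have := forall2_sum_le hbs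
        simp only [List.sum_cons] at hk
        omega)
      refine ⟨(x - t) :: u, List.Forall₂.cons (by omega) h1,
        List.Forall₂.cons (by omega) h2, ?_⟩
      simp only [List.sum_cons] at hk ⊢
      omega

lemma repl_forall2 : ∀ {l : List ℕ}, (∀ x ∈ l, 1 ≤ x) →
    List.Forall₂ (· ≤ ·) (List.replicate l.length 1) l := by
  intro l
  induction l with
  | nil => intro; simp
  | cons x xs ih =>
    intro h
    simp only [List.length_cons, List.replicate_succ]
    exact List.Forall₂.cons (h x (by simp)) (ih fun y hy => h y (by simp [hy]))

lemma comp_of_forall2 : ∀ {a u : List ℕ}, (∀ x ∈ a, 1 ≤ x) →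
    List.Forall₂ (· ≤ ·) a u → ∀ x ∈ u, 1 ≤ x := by
  intro a u ha h
  induction h with
  | nil => simp
  | @cons p q ps qs hx _ ih =>
    intro x hx2
    rcases List.mem_cons.mp hx2 with rfl | hmem
    · have := ha p (by simp); omega
    · exact ih (fun y hy => ha y (by simp [hy])) x hmem

theorem probe_ge_two_entries (k n : ℕ) (w : List ℕ) (hw : IsComposition w)
    (hn : w.sum = n) (h1 : k < w.count 1) (hm : w.length + 1 + k ≤ n) :
    ∀ i : Fin w.length,
      (∃ u ∈ kDel k w,
        CompLE (List.replicate (i : ℕ) 1 ++ 2 :: List.replicate (w.length - 1 - i) 1) u) ↔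
      2 ≤ w.get i := by
  intro i
  have hi : (i : ℕ) < w.length := i.isLt
  set a : List ℕ := List.replicate (i : ℕ) 1 ++ 2 :: List.replicate (w.length - 1 - i) 1
    with ha
  have hal : a.length = w.length := by
    simp only [ha, List.length_append, List.length_replicate, List.length_cons]
    omega
  have haget : a[(i : ℕ)]'(by omega) = 2 := by
    simp only [ha]
    rw [List.getElem_append_right (by simp)]
    simp
  have hamem : ∀ x ∈ a, 1 ≤ x := by
    intro x hx
    simp only [ha, List.mem_append, List.mem_cons, List.mem_replicate] at hx
    rcases hx with h | h | h <;> omega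
  constructor
  · rintro ⟨u, ⟨hucomp, ⟨v', hv', huv'⟩, husum⟩, ⟨v, hv, hav⟩⟩
    have l1 : a.length = v.length := hav.length_eq
    have l2 : v.length ≤ u.length := hv.length_le
    have l3 : u.length = v'.length := huv'.length_eq
    have l4 : v'.length ≤ w.length := hv'.length_le
    have hveq : v = u := hv.eq_of_length (by omega)
    have hv'eq : v' = w := hv'.eq_of_length (by omega)
    subst hveq hv'eq
    have g1 := (List.forall₂_iff_get.mp hav).2 (i : ℕ) (by omega) (by omega)
    have g2 := (List.forall₂_iff_get.mp huv').2 (i : ℕ) (by omega) (by omega)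
    simp only [List.get_eq_getElem] at g1 g2 ⊢
    rw [haget] at g1
    omega
  · intro h2
    have h2' : 2 ≤ w[(i : ℕ)] := by simpa using h2
    -- Forall₂ a w
    have hsplit : w = w.take (i : ℕ) ++ w[(i : ℕ)] :: w.drop ((i : ℕ) + 1) := by
      conv_lhs => rw [← List.take_append_drop (i : ℕ) w]
      rw [List.getElem_cons_drop]
    have htake : List.Forall₂ (· ≤ ·) (List.replicate (i : ℕ) 1) (w.take (i : ℕ)) := by
      have := repl_forall2 (l := w.take (i : ℕ))
        (fun x hx => hw x (List.mem_of_mem_take hx))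
      rwa [List.length_take, min_eq_left (by omega)] at this
    have hdrop : List.Forall₂ (· ≤ ·) (List.replicate (w.length - 1 - i) 1)
        (w.drop ((i : ℕ) + 1)) := by
      have := repl_forall2 (l := w.drop ((i : ℕ) + 1))
        (fun x hx => hw x (List.mem_of_mem_drop hx))
      rwa [List.length_drop, show w.length - ((i : ℕ) + 1) = w.length - 1 - i by omega]
        at this
    have haw : List.Forall₂ (· ≤ ·) a w := by
      have h3 : List.Forall₂ (· ≤ ·) a
          (w.take (i : ℕ) ++ w[(i : ℕ)] :: w.drop ((i : ℕ) + 1)) := by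
        simp only [ha]
        exact List.rel_append htake (List.Forall₂.cons h2' hdrop)
      rwa [← hsplit] at h3
    have hasum : a.sum = w.length + 1 := by
      simp only [ha, List.sum_append, List.sum_cons, List.sum_replicate, smul_eq_mul]
      omega
    obtain ⟨u, hau, huw, husum⟩ := exists_between_lists a w k haw (by rw [hasum, hn]; omega)
    exact ⟨u, ⟨comp_of_forall2 hamem hau, ⟨w, List.Sublist.refl w, huw⟩, husum⟩,
      ⟨u, List.Sublist.refl u, hau⟩⟩
end
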